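/- Let (V, Ω) be a symplectic vector space, A ∈ sp(V,Ω), and x ∈ V with Ω(x, Ax) = 1. Let D_x = {v ∈ V : Ω(x, v) = 0 and Ω(Ax, v) = 0}, and suppose j₀ is an endomorphism of D_x with j₀² = −Id which is a compatible complex structure for the restriction of Ω to D_x (i.e. Ω(j₀u, v) + Ω(u, j₀v) = 0 and Ω(u, j₀u) > 0 for u ≠ 0 in D_x). Then there exists a unique compatible complex structure J on (V, Ω) such that Jx = Ax, J(D_x) ⊆ D_x, and J restricts to j₀ on D_x; moreover this J satisfies J(Ax) = −x. (This is the linear-algebraic core of Lemma 6.8, identifying the fibre of the pulled-back twistor fibration over a point of the constraint surface Σ_A.) -/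

import Mathlib

/-!
Since `Ω (x, A x) = 1`, `V = span {x, A x} ⊕ D`, and the two summands are `Ω`-orthogonal.
A complex structure `J` with `J x = A x` has `J (A x) = J² x = -x`, so together with `J = j₀` on
`D` it is determined. Conversely the block-diagonal `J` built this way is compatible: the blocks
do not interact under `Ω`, and on the plane `Ω (u, J u) = a² + b²` for `u = a x + b A x`.
-/

namespace LinearMap

variable {R V : Type*} [CommRing R] [AddCommGroup V] [Module R V]
  {Ω : V →ₗ[R] V →ₗ[R] R} {x y : V}

def orthPair (Ω : V →ₗ[R] V →ₗ[R] R) (x y : V) : Submodule R V :=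
  ker (Ω x) ⊓ ker (Ω y)

theorem mem_orthPair {v : V} : v ∈ orthPair Ω x y ↔ Ω x v = 0 ∧ Ω y v = 0 := Iff.rfl

theorem apply_orthPair (p : orthPair Ω x y) : Ω x p = 0 ∧ Ω y p = 0 := p.2

theorem orthPair_apply (hΩ : Ω.IsAlt) (p : orthPair Ω x y) : Ω p x = 0 ∧ Ω p y = 0 := by
  rw [← hΩ.neg x, ← hΩ.neg y, (apply_orthPair p).1, (apply_orthPair p).2, neg_zero, and_self]

section

variable (hΩ : Ω.IsAlt) (hxy : Ω x y = 1)
include hΩ hxy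

theorem IsAlt.apply_swap_eq_neg_one : Ω y x = -1 := by
  rw [← hΩ.neg, hxy]

def orthPairProj : V →ₗ[R] orthPair Ω x y :=
  (id - (Ω.flip y).smulRight x - (Ω x).smulRight y).codRestrict _ fun v => by
    refine mem_orthPair.2 ⟨?_, ?_⟩ <;>
    simp only [sub_apply, id_apply, smulRight_apply, flip_apply, map_sub, map_smul, smul_eq_mul,
      hΩ.self_eq_zero, hxy, hΩ.apply_swap_eq_neg_one hxy, ← hΩ.neg y v] <;> ring

theorem coe_orthPairProj (v : V) :
    (orthPairProj hΩ hxy v : V) = v - Ω v y • x - Ω x v • y := rfl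

theorem eq_smul_add_smul_add_orthPairProj (v : V) :
    v = Ω v y • x + Ω x v • y + orthPairProj hΩ hxy v := by
  rw [coe_orthPairProj]; abel

theorem orthPairProj_left : orthPairProj hΩ hxy x = 0 := by
  ext; simp [coe_orthPairProj, hxy, hΩ.self_eq_zero]

theorem orthPairProj_right : orthPairProj hΩ hxy y = 0 := by
  ext; simp [coe_orthPairProj, hxy, hΩ.self_eq_zero]

theorem orthPairProj_coe (p : orthPair Ω x y) : orthPairProj hΩ hxy p = p := by
  ext; simp [coe_orthPairProj, (orthPair_apply hΩ p).2, (apply_orthPair p).1]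

theorem orthPair_apply_orthPairProj (p : orthPair Ω x y) (v : V) :
    Ω p (orthPairProj hΩ hxy v) = Ω p v := by
  simp [coe_orthPairProj, orthPair_apply hΩ p]

def extendByPair (j₀ : orthPair Ω x y →ₗ[R] orthPair Ω x y) : V →ₗ[R] V :=
  (Ω.flip y).smulRight y - (Ω x).smulRight x +
    (orthPair Ω x y).subtype ∘ₗ j₀ ∘ₗ orthPairProj hΩ hxy

variable (j₀ : orthPair Ω x y →ₗ[R] orthPair Ω x y)

theorem extendByPair_apply (v : V) :
    extendByPair hΩ hxy j₀ v = Ω v y • y - Ω x v • x + j₀ (orthPairProj hΩ hxy v) := rfl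

theorem extendByPair_left : extendByPair hΩ hxy j₀ x = y := by
  simp [extendByPair_apply, orthPairProj_left, hxy, hΩ.self_eq_zero]

theorem extendByPair_right : extendByPair hΩ hxy j₀ y = -x := by
  simp [extendByPair_apply, orthPairProj_right, hxy, hΩ.self_eq_zero]

theorem extendByPair_coe (p : orthPair Ω x y) : extendByPair hΩ hxy j₀ p = j₀ p := by
  simp [extendByPair_apply, orthPairProj_coe, (orthPair_apply hΩ p).2, (apply_orthPair p).1]

theorem apply_extendByPair (v : V) :
    Ω x (extendByPair hΩ hxy j₀ v) = Ω v y ∧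
      Ω y (extendByPair hΩ hxy j₀ v) = Ω x v := by
  simp [extendByPair_apply, apply_orthPair, hxy, hΩ.apply_swap_eq_neg_one hxy,
    hΩ.self_eq_zero]

theorem orthPairProj_extendByPair (v : V) :
    orthPairProj hΩ hxy (extendByPair hΩ hxy j₀ v) = j₀ (orthPairProj hΩ hxy v) := by
  ext
  rw [coe_orthPairProj, ← hΩ.neg y, (apply_extendByPair hΩ hxy j₀ v).1,
    (apply_extendByPair hΩ hxy j₀ v).2, extendByPair_apply]
  module

theorem extendByPair_extendByPair (hj₀ : ∀ p, j₀ (j₀ p) = -p) (v : V) :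
    extendByPair hΩ hxy j₀ (extendByPair hΩ hxy j₀ v) = -v := by
  have hv := eq_smul_add_smul_add_orthPairProj hΩ hxy v
  rw [extendByPair_apply, orthPairProj_extendByPair, hj₀, ← hΩ.neg y,
    (apply_extendByPair hΩ hxy j₀ v).1, (apply_extendByPair hΩ hxy j₀ v).2, Submodule.coe_neg]
  nth_rewrite 4 [hv]
  module

theorem extendByPair_apply_apply (u v : V) :
    Ω (extendByPair hΩ hxy j₀ u) v =
      Ω u y * Ω y v - Ω x u * Ω x v +
        Ω (j₀ (orthPairProj hΩ hxy u)) (orthPairProj hΩ hxy v) := by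
  simp [extendByPair_apply, orthPair_apply_orthPairProj]

theorem extendByPair_apply_add_apply_extendByPair
    (hj₀ : ∀ p q : orthPair Ω x y, Ω (j₀ p) q + Ω p (j₀ q) = 0) (u v : V) :
    Ω (extendByPair hΩ hxy j₀ u) v + Ω u (extendByPair hΩ hxy j₀ v) = 0 := by
  set π := orthPairProj hΩ hxy
  rw [← hΩ.neg (extendByPair hΩ hxy j₀ v), extendByPair_apply_apply, extendByPair_apply_apply]
  linear_combination hj₀ (π u) (π v) + hΩ.neg (j₀ (π v) : V) (π u) - Ω u y * hΩ.neg v y +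
    Ω v y * hΩ.neg u y

theorem apply_extendByPair_self (u : V) :
    Ω u (extendByPair hΩ hxy j₀ u) = Ω u y ^ 2 + Ω x u ^ 2 +
      Ω (orthPairProj hΩ hxy u) (j₀ (orthPairProj hΩ hxy u)) := by
  set p := orthPairProj hΩ hxy u
  rw [← hΩ.neg (extendByPair hΩ hxy j₀ u), extendByPair_apply_apply]
  linear_combination Ω u y * hΩ.neg u y + hΩ.neg (j₀ p : V) p

theorem apply_extendByPair_pos [LinearOrder R] [IsStrictOrderedRing R]
    (hj₀ : ∀ p : orthPair Ω x y, p ≠ 0 → 0 < Ω p (j₀ p)) {u : V} (hu : u ≠ 0) :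
    0 < Ω u (extendByPair hΩ hxy j₀ u) := by
  rw [apply_extendByPair_self]
  rcases eq_or_ne (orthPairProj hΩ hxy u) 0 with hp | hp
  · have : Ω u y ≠ 0 ∨ Ω x u ≠ 0 := by
      contrapose! hu
      rw [eq_smul_add_smul_add_orthPairProj hΩ hxy u, hu.1, hu.2, hp]
      simp
    rw [hp, ZeroMemClass.coe_zero, map_zero, zero_apply, add_zero]
    rcases this with h | h <;> positivity
  · have := hj₀ _ hp
    positivity

theorem ext_of_orthPair {W : Type*} [AddCommGroup W] [Module R W] {f g : V →ₗ[R] W}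
    (hx : f x = g x) (hy : f y = g y) (hp : ∀ p : orthPair Ω x y, f p = g p) : f = g := by
  ext v
  rw [eq_smul_add_smul_add_orthPairProj hΩ hxy v]
  simp only [map_add, map_smul, hx, hy, hp]

end

end LinearMap

open LinearMap in
theorem unique_compatible_extension_on_constraint_surface
    {V : Type*} [AddCommGroup V] [Module ℝ V]
    (Ω : V →ₗ[ℝ] V →ₗ[ℝ] ℝ)
    (hΩalt : ∀ v : V, Ω v v = 0)
    (A : V →ₗ[ℝ] V)
    (x : V) (hx : Ω x (A x) = 1)
    (D : Submodule ℝ V)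
    (hD : D = LinearMap.ker (Ω x) ⊓ LinearMap.ker (Ω (A x)))
    (j₀ : D →ₗ[ℝ] D)
    (hj₀sq : ∀ v : D, j₀ (j₀ v) = - v)
    (hj₀sp : ∀ u v : D, Ω (j₀ u : V) (v : V) + Ω (u : V) (j₀ v : V) = 0)
    (hj₀pos : ∀ u : D, u ≠ 0 → 0 < Ω (u : V) (j₀ u : V)) :
    (∃! J : V →ₗ[ℝ] V,
      (∀ u v : V, Ω (J u) v + Ω u (J v) = 0) ∧
      (∀ v : V, J (J v) = - v) ∧
      (∀ u : V, u ≠ 0 → 0 < Ω u (J u)) ∧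
      J x = A x ∧
      (∀ v ∈ D, J v ∈ D) ∧
      (∀ v : D, J (v : V) = (j₀ v : V))) ∧
    (∀ J : V →ₗ[ℝ] V,
      ((∀ u v : V, Ω (J u) v + Ω u (J v) = 0) ∧
       (∀ v : V, J (J v) = - v) ∧
       (∀ u : V, u ≠ 0 → 0 < Ω u (J u)) ∧
       J x = A x ∧
       (∀ v ∈ D, J v ∈ D) ∧
       (∀ v : D, J (v : V) = (j₀ v : V))) →
      J (A x) = - x) := by
  subst hD
  have hΩ : Ω.IsAlt := hΩalt
  have apply_Ax : ∀ J : V →ₗ[ℝ] V, (∀ v, J (J v) = -v) → J x = A x → J (A x) = -x :=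
    fun J hsq hJx => by rw [← hJx, hsq]
  refine ⟨⟨extendByPair hΩ hx j₀,
    ⟨extendByPair_apply_add_apply_extendByPair hΩ hx j₀ hj₀sp,
    extendByPair_extendByPair hΩ hx j₀ hj₀sq,
    fun u hu => apply_extendByPair_pos hΩ hx j₀ hj₀pos hu,
    extendByPair_left hΩ hx j₀, fun v hv => ?_, extendByPair_coe hΩ hx j₀⟩, ?_⟩,
    fun J hJ => apply_Ax J hJ.2.1 hJ.2.2.2.1⟩
  · rw [extendByPair_coe hΩ hx j₀ ⟨v, hv⟩]
    exact (j₀ _).2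
  · rintro J ⟨-, hsq, -, hJx, -, hJD⟩
    refine ext_of_orthPair hΩ hx (hJx.trans (extendByPair_left hΩ hx j₀).symm)
      ((apply_Ax J hsq hJx).trans (extendByPair_right hΩ hx j₀).symm) fun p => ?_
    exact (hJD p).trans (extendByPair_coe hΩ hx j₀ p).symm
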